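/- arXiv:2309.04601 — 2 statements merged into one kernel-verified Lean document; each statement's English description precedes it below -/
import Mathlib

section
/- Let L be a dense subset of ℝ that is closed under addition and negation. Let P ⊆ ℝ^n be a nonempty convex set whose affine hull is a translate of a rational subspace, i.e., there exist z ∈ ℝ^n and d¹, …, dℓ ∈ ℤ^n with aff(P) = { z + λ₁d¹ + ⋯ + λℓdℓ : λ ∈ ℝ^ℓ }. Then P contains a point of L^n if and only if aff(P) contains a point of L^n. -/
/-!
Let `x` be a point of `aff(P)` with coordinates in `L`, and write `aff(P) = x + span(d¹, …, dℓ)`.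
Since `L` is an additive group and the `dⁱ` are integral, the points `x + ∑ λᵢ dⁱ` with `λ ∈ Lˡ`
have coordinates in `L`; since `L` is dense they are dense in `aff(P)`. The relative interior
of the nonempty convex set `P` is a nonempty open subset of `aff(P)`, so it meets them.
-/

open Set

theorem Convex.inter_nonempty_of_affineSpan_subset_closure {E : Type*} [NormedAddCommGroup E]
    [NormedSpace ℝ E] [FiniteDimensional ℝ E] {P D : Set E} (hconv : Convex ℝ P)
    (hP : P.Nonempty) (hD : D ⊆ affineSpan ℝ P) (hdense : (affineSpan ℝ P : Set E) ⊆ closure D) :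
    (P ∩ D).Nonempty := by
  obtain ⟨_, hp⟩ := hP.intrinsicInterior hconv
  obtain ⟨q, hq, rfl⟩ := mem_intrinsicInterior.mp hp
  obtain ⟨U, hU, hUP⟩ :=
    isOpen_induced_iff.mp (isOpen_interior (s := ((↑) ⁻¹' P : Set (affineSpan ℝ P))))
  have hqU : (q : E) ∈ U := by rw [← hUP] at hq; exact hq
  obtain ⟨y, hyU, hyD⟩ := mem_closure_iff.mp (hdense q.2) U hU hqU
  have hy : (⟨y, hD hyD⟩ : affineSpan ℝ P) ∈ interior ((↑) ⁻¹' P) := by rw [← hUP]; exact hyU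
  exact ⟨y, interior_subset (s := ((↑) ⁻¹' P : Set (affineSpan ℝ P))) hy, hyD⟩

theorem range_add_sum_smul_eq_of_mem {R E ι : Type*} [Ring R] [AddCommGroup E] [Module R E]
    [Fintype ι] {z x : E} {v : ι → E} (hx : x ∈ range fun c : ι → R => z + ∑ i, c i • v i) :
    (range fun c : ι → R => x + ∑ i, c i • v i) = range fun c : ι → R => z + ∑ i, c i • v i := by
  obtain ⟨μ, rfl⟩ := hx
  ext y
  constructor
  · rintro ⟨c, rfl⟩
    exact ⟨μ + c, by simp only [Pi.add_apply, add_smul, Finset.sum_add_distrib, add_assoc]⟩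
  · rintro ⟨c, rfl⟩
    refine ⟨c - μ, ?_⟩
    simp only [Pi.sub_apply, sub_smul, Finset.sum_sub_distrib]
    abel

theorem AddSubgroup.add_sum_smul_intCast_apply_mem {R ι κ : Type*} [Ring R] [Fintype ι]
    (G : AddSubgroup R) {x : κ → R} (hx : ∀ j, x j ∈ G) (d : ι → κ → ℤ) {c : ι → R}
    (hc : ∀ i, c i ∈ G) (j : κ) : (x + ∑ i, c i • fun j => (d i j : R)) j ∈ G := by
  simp only [Pi.add_apply, Finset.sum_apply, Pi.smul_apply, smul_eq_mul]
  exact G.add_mem (hx j) <| G.sum_mem fun i _ => zsmul_eq_mul' (c i) (d i j) ▸ G.zsmul_mem (hc i) _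

theorem stmt_4 (L : Set ℝ) (hdense : Dense L)
    (hadd : ∀ x ∈ L, ∀ y ∈ L, x + y ∈ L) (hneg : ∀ x ∈ L, -x ∈ L)
    (n : ℕ) (P : Set (Fin n → ℝ)) (hP : P.Nonempty) (hconv : Convex ℝ P)
    (ℓ : ℕ) (z : Fin n → ℝ) (d : Fin ℓ → Fin n → ℤ)
    (haff : (affineSpan ℝ P : Set (Fin n → ℝ)) =
      {x | ∃ lam : Fin ℓ → ℝ, x = z + ∑ i, lam i • (fun j => (d i j : ℝ))}) :
    (∃ x ∈ P, ∀ i, x i ∈ L) ↔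
      ∃ x ∈ (affineSpan ℝ P : Set (Fin n → ℝ)), ∀ i, x i ∈ L := by
  refine ⟨fun ⟨x, hxP, hxL⟩ => ⟨x, subset_affineSpan ℝ P hxP, hxL⟩, ?_⟩
  rintro ⟨x, hxA, hxL⟩
  let G := AddSubgroup.ofSub L hdense.nonempty fun a ha b hb => hadd a ha _ (hneg b hb)
  let f := fun c : Fin ℓ → ℝ => x + ∑ i, c i • fun j => (d i j : ℝ)
  have haff' : (affineSpan ℝ P : Set (Fin n → ℝ)) = range f := by
    have hrange : (affineSpan ℝ P : Set (Fin n → ℝ)) =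
        range fun c : Fin ℓ → ℝ => z + ∑ i, c i • fun j => (d i j : ℝ) := by
      simp only [haff, range, eq_comm]
    rw [hrange, range_add_sum_smul_eq_of_mem (x := x) (hrange ▸ hxA)]
  have hfc : Continuous f := by fun_prop
  have hS : closure (univ.pi fun _ : Fin ℓ => L) = univ :=
    (dense_pi univ fun _ _ => hdense).closure_eq
  obtain ⟨_, hyP, c, hc, rfl⟩ := hconv.inter_nonempty_of_affineSpan_subset_closure hP
    (D := f '' univ.pi fun _ => L) (haff' ▸ image_subset_range _ _)
    (by rw [haff', ← image_univ, ← hS]; exact image_closure_subset_closure_image hfc)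
  exact ⟨_, hyP, G.add_sum_smul_intCast_apply_mem hxL d fun i => hc i (mem_univ i)⟩
end

section
/- Let L be a dense proper subset of ℝ that is closed under addition and negation. Let A be an m × n integer matrix, b ∈ ℤ^m, and suppose P = { x ∈ ℝ^n : Ax ≤ b } is nonempty. Then the following are equivalent: (a) P contains no point of L^n; (b) there exist ȳ, ū ∈ ℚ^m such that (i) supp(ū) ⊆ supp(ȳ), (ii) ȳ ≥ 0, Aᵀȳ = 0, and bᵀȳ = 0, and (iii) Aᵀū ∈ ℤ^n and bᵀū ∉ L. -/
/-!
(b) ⇒ (a): on `P` every row in the support of `ȳ` is tight (`ȳ ≥ 0` and `ȳᵀ(b - Ax) = 0`), so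
for `x ∈ P ∩ Lⁿ` we get `bᵀū = ūᵀAx = (Aᵀū)ᵀx`, an integer combination of elements of `L`.

(a) ⇒ (b): Fourier–Motzkin elimination produces rational Farkas certificates. From them we get
a rational `ȳ ≥ 0` with `Aᵀȳ = 0`, `bᵀȳ = 0` that is positive on every implicit equality of `P`,
and a point `x̂ ∈ P` satisfying all other rows strictly. For the implicit equalities `Cx = d` a
Smith normal form of the column lattice of `C` shows: either some rational `ū` with `Cᵀū`
integral has `dᵀū ∉ L`, or `{Cx = d} ∩ Lⁿ` is dense in `{Cx = d}` (as `L` is dense). In the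
second case a point of `{Cx = d} ∩ Lⁿ` close to `x̂` lies in `P`.
-/

open Matrix

theorem dotProduct_transpose_mulVec_le {R ι κ : Type*} [CommRing R] [PartialOrder R]
    [IsOrderedRing R] [Fintype ι] [Fintype κ] {A : Matrix ι κ R} {b : ι → R} {x : κ → R}
    {y : ι → R} (hy : 0 ≤ y) (hx : A *ᵥ x ≤ b) :
    x ⬝ᵥ (Aᵀ *ᵥ y) ≤ b ⬝ᵥ y := by
  rw [dotProduct_mulVec, vecMul_transpose]
  exact dotProduct_le_dotProduct_of_nonneg_right hx hy

theorem exists_between_of_finite {P N α : Type*} [Finite P] [Finite N] [LinearOrder α]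
    [DenselyOrdered α] [NoMinOrder α] [NoMaxOrder α] [Nonempty α] (U : P → α) (Lo : N → α)
    (SP : Set P) (SN : Set N) (h : ∀ p q, Lo q ≤ U p ∧ (p ∈ SP ∨ q ∈ SN → Lo q < U p)) :
    ∃ t, (∀ p, t ≤ U p ∧ (p ∈ SP → t < U p)) ∧ ∀ q, Lo q ≤ t ∧ (q ∈ SN → Lo q < t) := by
  rcases isEmpty_or_nonempty N with hN | hN
  · obtain ⟨m, hm⟩ := (Set.finite_range U).bddBelow
    obtain ⟨t, ht⟩ := exists_lt m
    have htU (p : P) : t < U p := ht.trans_le (hm ⟨p, rfl⟩)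
    exact ⟨t, fun p => ⟨(htU p).le, fun _ => htU p⟩, isEmptyElim⟩
  rcases isEmpty_or_nonempty P with hP | hP
  · obtain ⟨m, hm⟩ := (Set.finite_range Lo).bddAbove
    obtain ⟨t, ht⟩ := exists_gt m
    have hLt (q : N) : Lo q < t := (hm ⟨q, rfl⟩).trans_lt ht
    exact ⟨t, isEmptyElim, fun q => ⟨(hLt q).le, fun _ => hLt q⟩⟩
  obtain ⟨q₀, hq₀⟩ := Finite.exists_max Lo
  obtain ⟨p₀, hp₀⟩ := Finite.exists_min U
  rcases (h p₀ q₀).1.lt_or_eq with hlt | heq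
  · obtain ⟨t, hqt, htp⟩ := exists_between hlt
    exact ⟨t, fun p => ⟨(htp.trans_le (hp₀ p)).le, fun _ => htp.trans_le (hp₀ p)⟩,
      fun q => ⟨((hq₀ q).trans_lt hqt).le, fun _ => (hq₀ q).trans_lt hqt⟩⟩
  · refine ⟨Lo q₀, fun p => ⟨(h p q₀).1, fun hp => (h p q₀).2 (.inl hp)⟩,
      fun q => ⟨hq₀ q, fun hq => heq ▸ (h p₀ q).2 (.inr hq)⟩⟩

section FourierMotzkin

variable {K : Type*} [Field K] [LinearOrder K] {ι κ : Type*}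

def SolvesMixed [Fintype κ] (A : Matrix ι κ K) (b : ι → K) (S : Set ι) (x : κ → K) : Prop :=
  A *ᵥ x ≤ b ∧ ∀ i ∈ S, (A *ᵥ x) i < b i

def IsFarkasCertificate [Fintype ι] (A : Matrix ι κ K) (b : ι → K) (S : Set ι) (y : ι → K) :
    Prop :=
  0 ≤ y ∧ Aᵀ *ᵥ y = 0 ∧ (b ⬝ᵥ y < 0 ∨ b ⬝ᵥ y ≤ 0 ∧ ∃ i ∈ S, 0 < y i)

def IsImplicitEquality [Fintype κ] (A : Matrix ι κ K) (b : ι → K) (i : ι) : Prop :=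
  ∀ x, A *ᵥ x ≤ b → (A *ᵥ x) i = b i

def fourierMotzkinWeights [DecidableEq ι] (c : ι → K) :
    Matrix ({i // c i = 0} ⊕ {i // 0 < c i} × {i // c i < 0}) ι K :=
  Matrix.of <| Sum.elim (fun z => Pi.single z.1 1)
    fun pq => Pi.single pq.1.1 (-c pq.2.1) + Pi.single pq.2.1 (c pq.1.1)

@[simp]
theorem fourierMotzkinWeights_mulVec_inl [Fintype ι] [DecidableEq ι] (c v : ι → K) (z) :
    (fourierMotzkinWeights c *ᵥ v) (.inl z) = v z := by
  simp [fourierMotzkinWeights, mulVec]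

@[simp]
theorem fourierMotzkinWeights_mulVec_inr [Fintype ι] [DecidableEq ι] (c v : ι → K) (p q) :
    (fourierMotzkinWeights c *ᵥ v) (.inr (p, q)) = -c q * v p + c p * v q := by
  change (Pi.single _ _ + Pi.single _ _) ⬝ᵥ v = _
  rw [add_dotProduct, single_dotProduct, single_dotProduct]

theorem fourierMotzkinWeights_mulVec_self [Fintype ι] [DecidableEq ι] (c : ι → K) :
    fourierMotzkinWeights c *ᵥ c = 0 := by
  ext (z | ⟨p, q⟩)
  · simpa using z.2
  · simp; ring

variable [IsStrictOrderedRing K]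

theorem fourierMotzkinWeights_nonneg [DecidableEq ι] (c : ι → K) (k i) :
    0 ≤ fourierMotzkinWeights c k i := by
  rcases k with z | ⟨p, q⟩
  · simp [fourierMotzkinWeights, Pi.single_apply]
    split_ifs <;> norm_num
  · have := p.2; have := q.2
    simp only [fourierMotzkinWeights, of_apply, Sum.elim_inr, Pi.add_apply, Pi.single_apply]
    split_ifs <;> linarith

theorem exists_forall_mul_le [Finite ι] (c d : ι → K) (S : Set ι)
    (hzero : ∀ i, c i = 0 → 0 ≤ d i ∧ (i ∈ S → 0 < d i))
    (hpair : ∀ p q, 0 < c p → c q < 0 →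
      0 ≤ c p * d q - c q * d p ∧ (p ∈ S ∨ q ∈ S → 0 < c p * d q - c q * d p)) :
    ∃ t, ∀ i, c i * t ≤ d i ∧ (i ∈ S → c i * t < d i) := by
  obtain ⟨t, hU, hL⟩ := exists_between_of_finite (P := {p // 0 < c p}) (N := {q // c q < 0})
    (fun p => d p / c p) (fun q => d q / c q) {p | p.1 ∈ S} {q | q.1 ∈ S} fun p q => by
      have hp := p.2
      have hq := neg_pos.2 q.2
      simp only [Set.mem_ofPred_eq, ← neg_div_neg_eq (d q), div_le_div_iff₀ hq hp,
        div_lt_div_iff₀ hq hp]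
      exact ⟨by linarith [(hpair p q p.2 q.2).1], fun h => by linarith [(hpair p q p.2 q.2).2 h]⟩
  refine ⟨t, fun i => ?_⟩
  rcases lt_trichotomy (c i) 0 with hi | hi | hi
  · obtain ⟨h₁, h₂⟩ := hL ⟨i, hi⟩
    simp only [div_le_iff_of_neg hi, div_lt_iff_of_neg hi] at h₁ h₂
    exact ⟨by linarith, fun hS => by linarith [h₂ hS]⟩
  · simpa [hi] using hzero i hi
  · obtain ⟨h₁, h₂⟩ := hU ⟨i, hi⟩
    simp only [le_div_iff₀ hi, lt_div_iff₀ hi] at h₁ h₂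
    exact ⟨by linarith, fun hS => by linarith [h₂ hS]⟩

theorem exists_solvesMixed_vecCons [Fintype ι] [DecidableEq ι] {n : ℕ}
    (A : Matrix ι (Fin (n + 1)) K) (b : ι → K) (S : Set ι) {x : Fin n → K}
    (hx : SolvesMixed ((fourierMotzkinWeights (A · 0) * A).submatrix id Fin.succ)
      (fourierMotzkinWeights (A · 0) *ᵥ b) {k | ∃ i ∈ S, 0 < fourierMotzkinWeights (A · 0) k i} x) :
    ∃ t, SolvesMixed A b S (vecCons t x) := by
  set W := fourierMotzkinWeights (A · 0)
  set r := A.submatrix id Fin.succ *ᵥ x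
  have hred : (W * A).submatrix id Fin.succ *ᵥ x = W *ᵥ r := by
    rw [mulVec_mulVec]; rfl
  obtain ⟨hle, hlt⟩ := hx
  rw [hred] at hle hlt
  have hzero (z) (hz : A z 0 = 0) : 0 ≤ (b - r) z ∧ (z ∈ S → 0 < (b - r) z) := by
    have h := hle (.inl ⟨z, hz⟩)
    refine ⟨by simpa [W] using h, fun hS => ?_⟩
    have h' := hlt (.inl ⟨z, hz⟩) ⟨z, hS, by simp [W, fourierMotzkinWeights]⟩
    simpa [W] using h'
  have hpair (p q) (hp : 0 < A p 0) (hq : A q 0 < 0) :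
      0 ≤ A p 0 * (b - r) q - A q 0 * (b - r) p ∧
        (p ∈ S ∨ q ∈ S → 0 < A p 0 * (b - r) q - A q 0 * (b - r) p) := by
    have hpq : p ≠ q := by rintro rfl; linarith
    have h := hle (.inr (⟨p, hp⟩, ⟨q, hq⟩))
    simp only [W, fourierMotzkinWeights_mulVec_inr] at h
    refine ⟨by simp only [Pi.sub_apply]; linarith, fun hS => ?_⟩
    have hk : ∃ i ∈ S, 0 < W (.inr (⟨p, hp⟩, ⟨q, hq⟩)) i := by
      rcases hS with hS | hS
      · exact ⟨p, hS, by simp [W, fourierMotzkinWeights, hpq]; linarith⟩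
      · exact ⟨q, hS, by simp [W, fourierMotzkinWeights, hpq.symm]; linarith⟩
    have h' := hlt _ hk
    simp only [W, fourierMotzkinWeights_mulVec_inr] at h'
    simp only [Pi.sub_apply]
    linarith
  obtain ⟨t, ht⟩ := exists_forall_mul_le (A · 0) (b - r) S hzero hpair
  have hcons : A *ᵥ vecCons t x = fun i => A i 0 * t + r i := by
    ext i; simp [mulVec, r, mul_comm]; rfl
  refine ⟨t, fun i => ?_, fun i hi => ?_⟩ <;> rw [hcons]
  · linarith [(ht i).1, show (b - r) i = b i - r i from rfl]
  · linarith [(ht i).2 hi, show (b - r) i = b i - r i from rfl]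

theorem IsFarkasCertificate.of_mul [Fintype ι] {ι' : Type*} [Fintype ι'] {A : Matrix ι κ K}
    {b : ι → K} {S : Set ι} {W : Matrix ι' ι K} (hW : ∀ k i, 0 ≤ W k i) {y : ι' → K}
    (hy : IsFarkasCertificate (W * A) (W *ᵥ b) {k | ∃ i ∈ S, 0 < W k i} y) :
    IsFarkasCertificate A b S (Wᵀ *ᵥ y) := by
  obtain ⟨hy0, hyA, hyb⟩ := hy
  refine ⟨fun i => Finset.sum_nonneg fun k _ => mul_nonneg (hW k i) (hy0 k), ?_, ?_⟩
  · rw [mulVec_mulVec, ← transpose_mul, hyA]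
  · rw [dotProduct_mulVec, vecMul_transpose]
    refine hyb.imp_right fun ⟨hle, k, ⟨i, hiS, hWki⟩, hyk⟩ => ⟨hle, i, hiS, ?_⟩
    exact Finset.sum_pos' (fun k _ => mul_nonneg (hW k i) (hy0 k))
      ⟨k, Finset.mem_univ k, mul_pos hWki hyk⟩

theorem exists_isFarkasCertificate [Fintype ι] {n : ℕ} (A : Matrix ι (Fin n) K) (b : ι → K)
    (S : Set ι) (h : ¬ ∃ x, SolvesMixed A b S x) : ∃ y, IsFarkasCertificate A b S y := by
  induction n generalizing ι with
  | zero =>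
    classical
    obtain ⟨i, hi⟩ : ∃ i, b i < 0 ∨ i ∈ S ∧ b i ≤ 0 := by
      by_contra! hb
      exact h ⟨0, fun i => by simpa using (hb i).1, fun i hi => by simpa using (hb i).2 hi⟩
    refine ⟨Pi.single i 1, Pi.single_nonneg.2 zero_le_one, Subsingleton.elim _ _, ?_⟩
    simp only [dotProduct_single, mul_one]
    exact hi.imp_right fun ⟨hiS, hi⟩ => ⟨hi, i, hiS, by simp⟩
  | succ n ih =>
    classical
    set W := fourierMotzkinWeights (A · 0)
    obtain ⟨y, hy0, hyA, hyb⟩ := ih ((W * A).submatrix id Fin.succ) (W *ᵥ b)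
      {k | ∃ i ∈ S, 0 < W k i} fun ⟨x, hx⟩ => by
        obtain ⟨t, ht⟩ := exists_solvesMixed_vecCons A b S hx
        exact h ⟨_, ht⟩
    have hcol : (W * A)ᵀ *ᵥ y = 0 := by
      have hzero (k) : (W * A) k 0 = 0 := congrFun (fourierMotzkinWeights_mulVec_self _) k
      ext j
      refine Fin.cases ?_ (fun j => congrFun hyA j) j
      simp [mulVec, dotProduct, hzero]
    exact ⟨_, .of_mul (fourierMotzkinWeights_nonneg _) ⟨hy0, hcol, hyb⟩⟩

theorem exists_pos_of_isImplicitEquality [Fintype ι] {n : ℕ} {A : Matrix ι (Fin n) K} {b : ι → K}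
    (hne : ∃ x, A *ᵥ x ≤ b) :
    ∃ y, 0 ≤ y ∧ Aᵀ *ᵥ y = 0 ∧ b ⬝ᵥ y = 0 ∧ ∀ i, IsImplicitEquality A b i → 0 < y i := by
  obtain ⟨x₀, hx₀⟩ := hne
  have hrow (i) :
      ∃ y, 0 ≤ y ∧ Aᵀ *ᵥ y = 0 ∧ b ⬝ᵥ y = 0 ∧ (IsImplicitEquality A b i → 0 < y i) := by
    by_cases hi : IsImplicitEquality A b i
    -- with row `i` made strict there is no solution, and `0 ≤ b ⬝ᵥ y` forces `0 < y i`
    · obtain ⟨y, hy0, hyA, hyb⟩ :=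
        exists_isFarkasCertificate A b {i} fun ⟨x, hx, hxi⟩ => (hxi i rfl).ne (hi x hx)
      have hb : 0 ≤ b ⬝ᵥ y := by simpa [hyA] using dotProduct_transpose_mulVec_le hy0 hx₀
      obtain ⟨hle, j, rfl, hpos⟩ := hyb.resolve_left hb.not_gt
      exact ⟨y, hy0, hyA, le_antisymm hle hb, fun _ => hpos⟩
    · exact ⟨0, le_rfl, mulVec_zero _, dotProduct_zero _, hi.elim⟩
  choose y hy0 hyA hyb hpos using hrow
  refine ⟨∑ i, y i, Finset.sum_nonneg fun i _ => hy0 i, by simp [mulVec_sum, hyA],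
    by simp [dotProduct_sum, hyb], fun i hi => ?_⟩
  calc 0 < y i i := hpos i hi
    _ ≤ (∑ j, y j) i := by
      rw [Finset.sum_apply]
      exact Finset.single_le_sum (fun j _ => hy0 j i) (Finset.mem_univ i)

theorem exists_mem_forall_pos_of_concaveOn {E : Type*} [AddCommGroup E] [Module K E]
    [Fintype ι] {s : Set E} {f : ι → E → K} (hne : s.Nonempty) (hf : ∀ i, ConcaveOn K s (f i))
    (hnn : ∀ i, ∀ x ∈ s, 0 ≤ f i x) (hpos : ∀ i, ∃ x ∈ s, 0 < f i x) :
    ∃ x ∈ s, ∀ i, 0 < f i x := by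
  rcases isEmpty_or_nonempty ι with hι | ⟨⟨i₀⟩⟩
  · obtain ⟨x, hx⟩ := hne
    exact ⟨x, hx, isEmptyElim⟩
  choose p hps hp using hpos
  have hcard : (0 : K) < Fintype.card ι := by exact_mod_cast Fintype.card_pos_iff.2 ⟨i₀⟩
  set w : K := (Fintype.card ι : K)⁻¹
  have hw : 0 < w := inv_pos.2 hcard
  have hsum : ∑ _i : ι, w = 1 := by simp [w, hcard.ne']
  refine ⟨∑ i, w • p i, (hf i₀).1.sum_mem (fun _ _ => hw.le) hsum fun i _ => hps i, fun i => ?_⟩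
  refine lt_of_lt_of_le ?_ ((hf i).le_map_sum (fun _ _ => hw.le) hsum fun j _ => hps j)
  exact Finset.sum_pos' (fun j _ => smul_nonneg hw.le (hnn i _ (hps j)))
    ⟨i, Finset.mem_univ _, smul_pos hw (hp i)⟩

theorem exists_mulVec_le_forall_lt [Fintype ι] [Fintype κ] {A : Matrix ι κ K} {b : ι → K}
    (hne : ∃ x, A *ᵥ x ≤ b) :
    ∃ x, A *ᵥ x ≤ b ∧ ∀ i, ¬ IsImplicitEquality A b i → (A *ᵥ x) i < b i := by
  classical
  have hconv : Convex K {x | A *ᵥ x ≤ b} := (convex_Iic b).linear_preimage A.mulVecLin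
  have hslack (i : {i // ¬ IsImplicitEquality A b i}) :
      ∃ x, A *ᵥ x ≤ b ∧ 0 < b i - (A *ᵥ x) i := by
    obtain ⟨x, hx, hxi⟩ : ∃ x, A *ᵥ x ≤ b ∧ (A *ᵥ x) i ≠ b i := by
      simpa [IsImplicitEquality] using i.2
    exact ⟨x, hx, sub_pos.2 ((hx i).lt_of_ne hxi)⟩
  obtain ⟨x, hx, hpos⟩ := exists_mem_forall_pos_of_concaveOn
    (f := fun (i : {i // ¬ IsImplicitEquality A b i}) x => b i - (A *ᵥ x) i) hne
    (fun i => (concaveOn_const _ hconv).sub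
      (((LinearMap.proj i.1).comp A.mulVecLin).convexOn hconv))
    (fun i x hx => sub_nonneg.2 (hx i)) hslack
  exact ⟨x, hx, fun i hi => sub_pos.1 (hpos ⟨i, hi⟩)⟩

end FourierMotzkin

theorem Matrix.map_ratCast_mulVec {ι κ : Type*} [Fintype κ] (A : Matrix ι κ ℚ) (x : κ → ℚ) :
    A.map (Rat.cast : ℚ → ℝ) *ᵥ ((↑) ∘ x) = (↑) ∘ (A *ᵥ x) :=
  funext fun i => ((Rat.castHom ℝ).map_mulVec A x i).symm

theorem exists_rat_mulVec_le {ι : Type*} [Fintype ι] {n : ℕ} {A : Matrix ι (Fin n) ℚ} {b : ι → ℚ}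
    (h : ∃ x : Fin n → ℝ, A.map (↑) *ᵥ x ≤ (↑) ∘ b) : ∃ x, A *ᵥ x ≤ b := by
  by_contra hq
  obtain ⟨y, hy0, hyA, hyb⟩ := exists_isFarkasCertificate A b ∅ fun ⟨x, hx, _⟩ => hq ⟨x, hx⟩
  have hb : b ⬝ᵥ y < 0 := hyb.resolve_right fun ⟨_, _, h, _⟩ => h
  obtain ⟨x, hx⟩ := h
  have hdual :=
    dotProduct_transpose_mulVec_le (y := (↑) ∘ y) (fun i => Rat.cast_nonneg.2 (hy0 i)) hx
  rw [← transpose_map, map_ratCast_mulVec, hyA,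
    show ((↑) ∘ (0 : Fin n → ℚ) : Fin n → ℝ) = 0 from funext fun _ => Rat.cast_zero,
    dotProduct_zero] at hdual
  have hb' : ((↑) ∘ b : ι → ℝ) ⬝ᵥ ((↑) ∘ y) < 0 := by
    simpa [dotProduct] using (Rat.cast_lt (K := ℝ)).2 hb
  linarith

theorem Matrix.map_intCast_mul {R l m n : Type*} [Ring R] [Fintype m] (M : Matrix l m ℤ)
    (N : Matrix m n ℤ) :
    (M * N).map (Int.cast : ℤ → R) = (M.map (↑) : Matrix l m R) * (N.map (↑) : Matrix m n R) :=
  Matrix.map_mul (f := Int.castRingHom R)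

section Lattice

variable {ι κ : Type*} [Fintype κ]

/-- `Λ` is the basis of the column lattice of `C` given by a Smith normal form, and row `l` of `G`
is the matching dual coordinate divided by the `l`-th invariant factor. -/
theorem Matrix.exists_eq_mul_rat_leftInverse [Fintype ι] (C : Matrix ι κ ℤ) :
    ∃ (r : ℕ) (Λ : Matrix ι (Fin r) ℤ) (E : Matrix (Fin r) κ ℤ) (W : Matrix κ (Fin r) ℤ)
      (G : Matrix (Fin r) ι ℚ), C = Λ * E ∧ Λ = C * W ∧ G * Λ.map (Int.cast : ℤ → ℚ) = 1 := by
  classical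
  obtain ⟨r, bM, bN, f, a, hsnf⟩ :=
    (LinearMap.range C.mulVecLin).smithNormalForm (Pi.basisFun ℤ ι)
  have hcol (k : κ) : Cᵀ k ∈ LinearMap.range C.mulVecLin := ⟨Pi.single k 1, by simp; rfl⟩
  choose w hw using fun l => (bN l).2
  have ha (l) : a l ≠ 0 := fun h => bN.ne_zero l (Subtype.ext (by simp [hsnf l, h]))
  set Q := bM.toMatrix (Pi.basisFun ℤ ι)
  have hQ (v : ι → ℤ) : Q *ᵥ v = bM.repr v := by
    have := (Pi.basisFun ℤ ι).toMatrix_mulVec_repr bM v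
    rwa [show ⇑((Pi.basisFun ℤ ι).repr v) = v from funext (Pi.basisFun_repr ℤ ι v)] at this
  refine ⟨r, of fun i l => (bN l : ι → ℤ) i, of fun l k => bN.repr ⟨Cᵀ k, hcol k⟩ l,
    of fun k l => w l k, of fun l i => (a l : ℚ)⁻¹ * Q (f l) i, ?_, ?_, ?_⟩
  · ext i k
    have := congrArg (fun v : LinearMap.range C.mulVecLin => (v : ι → ℤ) i)
      (bN.sum_repr ⟨Cᵀ k, hcol k⟩)
    simp only [Submodule.coe_sum, Submodule.coe_smul, Finset.sum_apply, Pi.smul_apply,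
      smul_eq_mul] at this
    simp only [mul_apply, of_apply]
    simpa only [mul_comm, transpose_apply] using this.symm
  · ext i l
    simpa [mul_apply, mulVec, dotProduct] using (congrFun (hw l) i).symm
  · ext l l'
    have hrepr : bM.repr (bN l') (f l) = if l = l' then a l else 0 := by
      rw [hsnf l', map_smul, bM.repr_self]
      by_cases hll : l = l' <;> simp [hll, f.injective.eq_iff]
    have h := congrArg (Int.cast : ℤ → ℚ) ((congrFun (hQ (bN l')) (f l)).trans hrepr)
    simp only [mulVec, dotProduct, Int.cast_sum, Int.cast_mul] at h
    simp only [mul_apply, of_apply, map_apply, mul_assoc, ← Finset.mul_sum, one_apply, h]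
    split_ifs with hll
    · subst hll; exact inv_mul_cancel₀ (Int.cast_ne_zero.2 (ha l))
    · simp

variable (L : AddSubgroup ℝ)

theorem exists_solution_mem_or_certificate [Fintype ι] (C : Matrix ι κ ℤ) (d : ι → ℤ) {x₀ : κ → ℝ}
    (hx₀ : C.map (↑) *ᵥ x₀ = (↑) ∘ d) :
    (∃ x, (∀ k, x k ∈ L) ∧ C.map (↑) *ᵥ x = (↑) ∘ d) ∨
      ∃ u : ι → ℚ, (∃ z : κ → ℤ, (C.map (↑))ᵀ *ᵥ u = (↑) ∘ z) ∧ ((((↑) ∘ d) ⬝ᵥ u : ℚ) : ℝ) ∉ L := by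
  classical
  obtain ⟨r, Λ, E, W, G, hCE, hΛW, hGΛ⟩ := C.exists_eq_mul_rat_leftInverse
  set t : Fin r → ℝ := E.map (↑) *ᵥ x₀
  have hd : ((↑) ∘ d : ι → ℝ) = Λ.map (↑) *ᵥ t := by
    rw [← hx₀, hCE, map_intCast_mul, ← mulVec_mulVec]
  by_cases ht : ∀ l, t l ∈ L
  · refine .inl ⟨W.map (↑) *ᵥ t, fun k => ?_, ?_⟩
    · show ∑ l, (W k l : ℝ) * t l ∈ L
      exact L.sum_mem fun l _ => by simpa [zsmul_eq_mul] using L.zsmul_mem (ht l) (W k l)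
    · rw [mulVec_mulVec, ← map_intCast_mul, ← hΛW, hd]
  obtain ⟨l, hl⟩ := not_forall.1 ht
  have hrow : G l ᵥ* Λ.map (↑) = Pi.single l 1 := by
    ext j; exact (congrFun (congrFun hGΛ l) j).trans one_eq_pi_single
  have hrowℝ : ((↑) ∘ G l : ι → ℝ) ᵥ* Λ.map (↑) = Pi.single l 1 := by
    ext j
    have := congrArg ((↑) : ℚ → ℝ) (congrFun hrow j)
    simp only [vecMul, dotProduct, Rat.cast_sum, Rat.cast_mul, map_apply, Rat.cast_intCast] at this
    simp only [vecMul, dotProduct, Function.comp_apply, map_apply, this]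
    by_cases hj : j = l <;> simp [hj]
  refine .inr ⟨G l, ⟨E l, ?_⟩, ?_⟩
  · rw [mulVec_transpose, hCE, map_intCast_mul, ← vecMul_vecMul, hrow, single_vecMul, one_smul]
    rfl
  · have hval : ((((↑) ∘ d) ⬝ᵥ G l : ℚ) : ℝ) = ((↑) ∘ d : ι → ℝ) ⬝ᵥ ((↑) ∘ G l) := by
      simp [dotProduct]
    rwa [hval, hd, dotProduct_comm, dotProduct_mulVec, hrowℝ, single_dotProduct, one_mul]

def kernelPoints (C : Matrix ι κ ℚ) : AddSubgroup (κ → ℝ) :=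
  AddSubgroup.pi Set.univ (fun _ => L) ⊓
    (LinearMap.ker (C.map ((↑) : ℚ → ℝ)).mulVecLin).toAddSubgroup

variable {L}

theorem mem_kernelPoints {C : Matrix ι κ ℚ} {v : κ → ℝ} :
    v ∈ kernelPoints L C ↔ (∀ k, v k ∈ L) ∧ C.map (↑) *ᵥ v = 0 := by
  simp [kernelPoints, AddSubgroup.mem_pi]

theorem smul_mem_closure_kernelPoints (hL : Dense (L : Set ℝ)) {C : Matrix ι κ ℚ} {q : κ → ℚ}
    (hq : C *ᵥ q = 0) (r : ℝ) : r • ((↑) ∘ q : κ → ℝ) ∈ (kernelPoints L C).topologicalClosure := by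
  obtain ⟨D, hD⟩ := IsLocalization.exist_integer_multiples_of_finite (nonZeroDivisors ℤ) q
  choose w hw using hD
  have hD0 : ((D : ℤ) : ℝ) ≠ 0 := Int.cast_ne_zero.2 (nonZeroDivisors.coe_ne_zero D)
  have hwq : ((↑) ∘ w : κ → ℝ) = ((D : ℤ) : ℝ) • ((↑) ∘ q) :=
    funext fun k => by simpa using congrArg ((↑) : ℚ → ℝ) (hw k)
  have hmaps : Set.MapsTo (fun s : ℝ => s • ((↑) ∘ w : κ → ℝ)) L (kernelPoints L C) := by
    refine fun s hs => mem_kernelPoints.2 ⟨fun k => ?_, ?_⟩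
    · simpa [zsmul_eq_mul, mul_comm] using L.zsmul_mem hs (w k)
    · rw [mulVec_smul, hwq, mulVec_smul, map_ratCast_mulVec, hq]
      ext; simp
  rw [← SetLike.mem_coe, AddSubgroup.topologicalClosure_coe]
  convert map_mem_closure (by fun_prop) (hL (r / (D : ℤ))) hmaps using 1
  rw [hwq, smul_smul, div_mul_cancel₀ _ hD0]

/-- Expanding `z` in a `ℚ`-basis of the `ℚ`-span of its coordinates writes it as a real
combination of rational kernel vectors. -/
theorem mem_closure_kernelPoints (hL : Dense (L : Set ℝ)) (C : Matrix ι κ ℚ) {z : κ → ℝ}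
    (hz : C.map (↑) *ᵥ z = 0) : z ∈ (kernelPoints L C).topologicalClosure := by
  set V := Submodule.span ℚ (Set.range z)
  have hzV (k : κ) : z k ∈ V := Submodule.subset_span ⟨k, rfl⟩
  have : FiniteDimensional ℚ V := FiniteDimensional.span_of_finite ℚ (Set.finite_range z)
  let e := Module.finBasis ℚ V
  let q : Fin (Module.finrank ℚ V) → κ → ℚ := fun l k => e.repr ⟨z k, hzV k⟩ l
  have hz_eq : z = ∑ l, (e l : ℝ) • ((↑) ∘ q l : κ → ℝ) := by
    ext k
    have := congrArg ((↑) : V → ℝ) (e.sum_repr ⟨z k, hzV k⟩)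
    simp only [Submodule.coe_sum, Submodule.coe_smul, Rat.smul_def] at this
    rw [Finset.sum_apply, ← this]
    simp only [Pi.smul_apply, Function.comp_apply, smul_eq_mul, mul_comm, q]
  have hq (l) : C *ᵥ q l = 0 := by
    ext i
    show ∑ k, C i k * q l k = 0
    have hsum : ∑ k, C i k • (⟨z k, hzV k⟩ : V) = 0 := by
      ext
      simpa [Rat.smul_def, mulVec, dotProduct] using congrFun hz i
    have := congrArg (fun v => e.repr v l) hsum
    simpa only [map_sum, map_smul, Finsupp.coe_finsetSum, Finset.sum_apply, Finsupp.smul_apply,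
      smul_eq_mul, map_zero, Finsupp.coe_zero, Pi.zero_apply] using this
  rw [hz_eq]
  exact sum_mem fun l _ => smul_mem_closure_kernelPoints hL (hq l) _

theorem exists_certificate_or_mem_closure [Fintype ι] (hL : Dense (L : Set ℝ))
    (C : Matrix ι κ ℤ) (d : ι → ℤ) {x₀ : κ → ℝ} (hx₀ : C.map (↑) *ᵥ x₀ = (↑) ∘ d) :
    (∃ u : ι → ℚ, (∃ z : κ → ℤ, (C.map (↑))ᵀ *ᵥ u = (↑) ∘ z) ∧ ((((↑) ∘ d) ⬝ᵥ u : ℚ) : ℝ) ∉ L) ∨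
      x₀ ∈ closure {x | (∀ k, x k ∈ L) ∧ C.map (↑) *ᵥ x = (↑) ∘ d} := by
  refine (exists_solution_mem_or_certificate L C d hx₀).symm.imp_right fun ⟨x₁, hx₁L, hx₁⟩ => ?_
  have hC : (C.map (Int.cast : ℤ → ℚ)).map (Rat.cast : ℚ → ℝ) = C.map (↑) := by ext; simp
  have hker := mem_closure_kernelPoints hL (C.map (↑)) (z := x₀ - x₁)
    (by rw [hC, mulVec_sub, hx₀, hx₁, sub_self])
  rw [← SetLike.mem_coe, AddSubgroup.topologicalClosure_coe] at hker
  have hmaps : Set.MapsTo (x₁ + ·) (kernelPoints L (C.map (↑)))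
      {x | (∀ k, x k ∈ L) ∧ C.map (↑) *ᵥ x = (↑) ∘ d} := by
    intro v hv
    obtain ⟨hvL, hv⟩ := mem_kernelPoints.1 hv
    rw [hC] at hv
    exact ⟨fun k => L.add_mem (hx₁L k) (hvL k), by rw [mulVec_add, hx₁, hv, add_zero]⟩
  simpa using map_mem_closure (continuous_const.add continuous_id) hker hmaps

theorem exists_mem_mulVec_le_of_mem_closure [Finite ι] {A : Matrix ι κ ℝ} {b : ι → ℝ} {p : ι → Prop}
    {s : Set (κ → ℝ)} (hs : ∀ x ∈ s, ∀ i, p i → (A *ᵥ x) i = b i) {x₀ : κ → ℝ}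
    (hx₀ : x₀ ∈ closure s) (hslack : ∀ i, ¬ p i → (A *ᵥ x₀) i < b i) :
    ∃ x ∈ s, A *ᵥ x ≤ b := by
  have hU : IsOpen {x : κ → ℝ | ∀ i, ¬ p i → (A *ᵥ x) i < b i} := by
    simp only [Set.ofPred_forall]
    refine isOpen_iInter_of_finite fun i => isOpen_iInter_of_finite fun _ => ?_
    exact isOpen_lt (by fun_prop) continuous_const
  obtain ⟨x, hxU, hxs⟩ := mem_closure_iff.1 hx₀ _ hU hslack
  refine ⟨x, hxs, fun i => ?_⟩
  by_cases hi : p i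
  · exact (hs x hxs i hi).le
  · exact (hxU i hi).le

end Lattice

theorem exists_certificate_of_forall_not_mem {ι : Type*} [Fintype ι] (L : AddSubgroup ℝ)
    (hL : Dense (L : Set ℝ)) {n : ℕ} (A : Matrix ι (Fin n) ℤ) (b : ι → ℤ)
    (hne : ∃ x : Fin n → ℝ, A.map (↑) *ᵥ x ≤ (↑) ∘ b)
    (hnoL : ∀ x : Fin n → ℝ, A.map (↑) *ᵥ x ≤ (↑) ∘ b → ¬ ∀ j, x j ∈ L) :
    ∃ y u : ι → ℚ, (∀ i, u i ≠ 0 → y i ≠ 0) ∧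
      (0 ≤ y ∧ (A.map (↑))ᵀ *ᵥ y = 0 ∧ ((↑) ∘ b) ⬝ᵥ y = 0) ∧
      (∃ z : Fin n → ℤ, (A.map (↑))ᵀ *ᵥ u = (↑) ∘ z) ∧ ((((↑) ∘ b) ⬝ᵥ u : ℚ) : ℝ) ∉ L := by
  classical
  set Aq : Matrix ι (Fin n) ℚ := A.map (↑)
  set bq : ι → ℚ := (↑) ∘ b
  have hcast (x : Fin n → ℚ) (i) : (((Aq *ᵥ x) i : ℚ) : ℝ) = (A.map (↑) *ᵥ ((↑) ∘ x)) i := by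
    simp [Aq, mulVec, dotProduct]
  obtain ⟨x₀, hx₀⟩ := exists_rat_mulVec_le (A := Aq) (b := bq) (by
    convert hne using 4 <;> ext <;> simp [Aq, bq])
  obtain ⟨y, hy0, hyA, hyb, hypos⟩ := exists_pos_of_isImplicitEquality ⟨x₀, hx₀⟩
  obtain ⟨x₁, hx₁, hslack⟩ := exists_mulVec_le_forall_lt ⟨x₀, hx₀⟩
  set p := IsImplicitEquality Aq bq
  -- the subsystem of implicit equalities, with all other rows replaced by `0 = 0`
  let C : Matrix ι (Fin n) ℤ := of fun i j => if p i then A i j else 0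
  let d : ι → ℤ := fun i => if p i then b i else 0
  have hC (x : Fin n → ℝ) : C.map (↑) *ᵥ x = (↑) ∘ d ↔ ∀ i, p i → (A.map (↑) *ᵥ x) i = b i := by
    refine funext_iff.trans (forall_congr' fun i => ?_)
    by_cases hi : p i <;> simp [C, d, hi, mulVec, dotProduct]
  have hx₁C : C.map (↑) *ᵥ ((↑) ∘ x₁ : Fin n → ℝ) = (↑) ∘ d :=
    (hC _).2 fun i hi => by rw [← hcast, hi x₁ hx₁]; simp [bq]
  rcases exists_certificate_or_mem_closure hL C d hx₁C with ⟨u, ⟨z, hz⟩, hu⟩ | hcl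
  · refine ⟨y, fun i => if p i then u i else 0, fun i hi => (hypos i ?_).ne',
      ⟨hy0, hyA, hyb⟩, ⟨z, ?_⟩, ?_⟩
    · by_contra h; simp [h] at hi
    · rw [← hz]; ext j; simp [C, Aq, mulVec, dotProduct, ite_mul, mul_ite]
    · convert hu using 3; simp [d, bq, dotProduct, ite_mul, mul_ite]
  · obtain ⟨x, ⟨hxL, -⟩, hxP⟩ := exists_mem_mulVec_le_of_mem_closure
      (fun x hx => (hC x).1 hx.2) hcl fun i hi => by rw [← hcast]; exact_mod_cast hslack i hi
    exact absurd hxL (hnoL x hxP)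

theorem not_forall_mem_of_certificate {ι κ : Type*} [Fintype ι] [Fintype κ] (L : AddSubgroup ℝ)
    {A : Matrix ι κ ℝ} {b : ι → ℝ} {y u : ι → ℝ} (hsupp : ∀ i, u i ≠ 0 → y i ≠ 0) (hy : 0 ≤ y)
    (hyA : Aᵀ *ᵥ y = 0) (hyb : b ⬝ᵥ y = 0) (hu : ∃ z : κ → ℤ, Aᵀ *ᵥ u = (↑) ∘ z)
    (hub : b ⬝ᵥ u ∉ L) {x : κ → ℝ} (hx : A *ᵥ x ≤ b) : ¬ ∀ k, x k ∈ L := by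
  intro hxL
  obtain ⟨z, hz⟩ := hu
  have hslack : ∑ i, (b - A *ᵥ x) i * y i = 0 := by
    change (b - A *ᵥ x) ⬝ᵥ y = 0
    rw [sub_dotProduct, hyb, dotProduct_comm, dotProduct_mulVec, ← mulVec_transpose, hyA,
      zero_dotProduct, sub_zero]
  have htight (i) (hi : y i ≠ 0) : (A *ᵥ x) i = b i := by
    have := (Finset.sum_eq_zero_iff_of_nonneg fun i _ => mul_nonneg (sub_nonneg.2 (hx i)) (hy i)).1
      hslack i (Finset.mem_univ i)
    exact (sub_eq_zero.1 ((mul_eq_zero.1 this).resolve_right hi)).symm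
  have hbu : b ⬝ᵥ u = (A *ᵥ x) ⬝ᵥ u := Finset.sum_congr rfl fun i _ => by
    by_cases hui : u i = 0
    · simp [hui]
    · rw [htight i (hsupp i hui)]
  apply hub
  rw [hbu, dotProduct_comm, dotProduct_mulVec, ← mulVec_transpose, hz]
  exact L.sum_mem fun k _ => by simpa [zsmul_eq_mul, mul_comm] using L.zsmul_mem (hxL k) (z k)

theorem stmt_9_general (L : Set ℝ) (hdense : Dense L)
    (hadd : ∀ x ∈ L, ∀ y ∈ L, x + y ∈ L) (hneg : ∀ x ∈ L, -x ∈ L)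
    (m n : ℕ) (A : Matrix (Fin m) (Fin n) ℤ) (b : Fin m → ℤ)
    (hne : ∃ x : Fin n → ℝ, ∀ i, ∑ j, (A i j : ℝ) * x j ≤ (b i : ℝ)) :
    (¬ ∃ x : Fin n → ℝ, (∀ i, ∑ j, (A i j : ℝ) * x j ≤ (b i : ℝ)) ∧ ∀ j, x j ∈ L) ↔
      ∃ y u : Fin m → ℚ,
        (∀ i, u i ≠ 0 → y i ≠ 0) ∧
        ((∀ i, 0 ≤ y i) ∧ (∀ j, ∑ i, (A i j : ℚ) * y i = 0) ∧ (∑ i, (b i : ℚ) * y i = 0)) ∧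
        ((∀ j, ∃ zz : ℤ, ∑ i, (A i j : ℚ) * u i = (zz : ℚ)) ∧
          ((∑ i, (b i : ℚ) * u i : ℚ) : ℝ) ∉ L) := by
  let G := AddSubgroup.ofSub L hdense.nonempty fun x hx y hy => hadd x hx (-y) (hneg y hy)
  constructor
  · intro h
    obtain ⟨y, u, hsupp, ⟨hy, hyA, hyb⟩, ⟨z, hz⟩, hub⟩ :=
      exists_certificate_of_forall_not_mem G hdense A b hne fun x hx hxL => h ⟨x, hx, hxL⟩
    exact ⟨y, u, hsupp, ⟨hy, congrFun hyA, hyb⟩, fun j => ⟨z j, congrFun hz j⟩, hub⟩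
  · rintro ⟨y, u, hsupp, ⟨hy, hyA, hyb⟩, huA, hub⟩ ⟨x, hx, hxL⟩
    choose z hz using huA
    refine not_forall_mem_of_certificate G (A := A.map (Int.cast : ℤ → ℝ)) (b := fun i => (b i : ℝ))
      (y := fun i => (y i : ℝ)) (u := fun i => (u i : ℝ)) (by simpa using hsupp)
      (fun i => by simpa using hy i) ?_ ?_ ⟨z, ?_⟩ ?_ (x := x) hx hxL
    · ext j; simpa [mulVec, dotProduct] using congrArg ((↑) : ℚ → ℝ) (hyA j)
    · simpa [dotProduct] using congrArg ((↑) : ℚ → ℝ) hyb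
    · ext j; simpa [mulVec, dotProduct] using congrArg ((↑) : ℚ → ℝ) (hz j)
    · change _ ∉ L
      simpa [dotProduct] using hub

theorem stmt_9 (L : Set ℝ) (hdense : Dense L) (hproper : L ≠ Set.univ)
    (hadd : ∀ x ∈ L, ∀ y ∈ L, x + y ∈ L) (hneg : ∀ x ∈ L, -x ∈ L)
    (m n : ℕ) (A : Matrix (Fin m) (Fin n) ℤ) (b : Fin m → ℤ)
    (hne : ∃ x : Fin n → ℝ, ∀ i, ∑ j, (A i j : ℝ) * x j ≤ (b i : ℝ)) :
    (¬ ∃ x : Fin n → ℝ, (∀ i, ∑ j, (A i j : ℝ) * x j ≤ (b i : ℝ)) ∧ ∀ j, x j ∈ L) ↔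
      ∃ y u : Fin m → ℚ,
        (∀ i, u i ≠ 0 → y i ≠ 0) ∧
        ((∀ i, 0 ≤ y i) ∧ (∀ j, ∑ i, (A i j : ℚ) * y i = 0) ∧ (∑ i, (b i : ℚ) * y i = 0)) ∧
        ((∀ j, ∃ zz : ℤ, ∑ i, (A i j : ℚ) * u i = (zz : ℚ)) ∧
          ((∑ i, (b i : ℚ) * u i : ℚ) : ℝ) ∉ L) :=
  stmt_9_general L hdense hadd hneg m n A b hne
end
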